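/- arXiv:2401.04436 — 2 statements merged into one kernel-verified Lean document; each statement's English description precedes it below -/
import Mathlib

section
/- The flux Q(ρ) = ρ·V(ρ) is strictly increasing on (0, ρ_cr) and strictly decreasing on (ρ_cr, ∞). -/
/-!
Writing `x = ρ / ρ_cr`, the flux is `v_max * ρ_cr * x * exp (-x ^ a / a)`. The profile
`x * exp (-x ^ a / a)` has derivative `exp (-x ^ a / a) * (1 - x ^ a)` for `x > 0`, which is positive
for `x < 1` and negative for `x > 1`: the flux peaks exactly at the critical density.
-/

open Real Set

noncomputable def fluxProfile (a x : ℝ) : ℝ := x * exp (-(1 / a) * x ^ a)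

section fluxProfile

variable {a : ℝ}

theorem hasDerivAt_fluxProfile (ha : a ≠ 0) {x : ℝ} (hx : 0 < x) :
    HasDerivAt (fluxProfile a) (exp (-(1 / a) * x ^ a) * (1 - x ^ a)) x := by
  have hpow := (hasDerivAt_rpow_const (p := a) (Or.inl hx.ne')).const_mul (-(1 / a))
  refine ((hasDerivAt_id' x).mul hpow.exp).congr_deriv ?_
  rw [rpow_sub_one hx.ne']
  field_simp
  ring

theorem continuousOn_fluxProfile (ha : a ≠ 0) : ContinuousOn (fluxProfile a) (Ioi 0) :=
  fun _ hx => (hasDerivAt_fluxProfile ha hx).continuousAt.continuousWithinAt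

theorem strictMonoOn_fluxProfile (ha : 0 < a) : StrictMonoOn (fluxProfile a) (Ioc 0 1) := by
  refine strictMonoOn_of_hasDerivWithinAt_pos (f' := fun x => exp (-(1 / a) * x ^ a) * (1 - x ^ a))
    (convex_Ioc 0 1)
    ((continuousOn_fluxProfile ha.ne').mono Ioc_subset_Ioi_self)
    (fun x hx => ?_) (fun x hx => ?_)
  · rw [interior_Ioc] at hx
    exact (hasDerivAt_fluxProfile ha.ne' hx.1).hasDerivWithinAt
  · rw [interior_Ioc] at hx
    exact mul_pos (exp_pos _) (sub_pos.2 (rpow_lt_one hx.1.le hx.2 ha))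

theorem strictAntiOn_fluxProfile (ha : 0 < a) : StrictAntiOn (fluxProfile a) (Ici 1) := by
  refine strictAntiOn_of_hasDerivWithinAt_neg (f' := fun x => exp (-(1 / a) * x ^ a) * (1 - x ^ a))
    (convex_Ici 1)
    ((continuousOn_fluxProfile ha.ne').mono fun _ hx => zero_lt_one.trans_le (mem_Ici.1 hx))
    (fun x hx => ?_) (fun x hx => ?_)
  · rw [interior_Ici] at hx
    exact (hasDerivAt_fluxProfile ha.ne' (zero_lt_one.trans hx)).hasDerivWithinAt
  · rw [interior_Ici] at hx
    exact mul_neg_of_pos_of_neg (exp_pos _) (sub_neg.2 (one_lt_rpow hx ha))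

end fluxProfile

theorem flux_eq_fluxProfile {ρ_cr : ℝ} (hρ : ρ_cr ≠ 0) (v_max a : ℝ) :
    (fun ρ : ℝ => ρ * v_max * exp (-(1/a) * (ρ/ρ_cr) ^ a)) =
      fun ρ => v_max * ρ_cr * fluxProfile a (ρ / ρ_cr) := by
  ext ρ
  rw [fluxProfile]
  field_simp

theorem flux_monotonicity
    (v_max ρ_cr a : ℝ) (hv : 0 < v_max) (hρ : 0 < ρ_cr) (ha : 0 < a) :
    StrictMonoOn (fun ρ : ℝ => ρ * v_max * Real.exp (-(1/a) * (ρ/ρ_cr) ^ a))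
        (Set.Ioo 0 ρ_cr) ∧
    StrictAntiOn (fun ρ : ℝ => ρ * v_max * Real.exp (-(1/a) * (ρ/ρ_cr) ^ a))
        (Set.Ioi ρ_cr) := by
  rw [flux_eq_fluxProfile hρ.ne']
  have hscale : StrictMono fun ρ : ℝ => ρ / ρ_cr := fun _ _ h => div_lt_div_of_pos_right h hρ
  have hc : 0 < v_max * ρ_cr := mul_pos hv hρ
  constructor
  · intro x hx y hy hxy
    refine mul_lt_mul_of_pos_left (strictMonoOn_fluxProfile ha ?_ ?_ (hscale hxy)) hc
    exacts [⟨div_pos hx.1 hρ, (div_le_one hρ).2 hx.2.le⟩, ⟨div_pos hy.1 hρ, (div_le_one hρ).2 hy.2.le⟩]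
  · intro x hx y hy hxy
    refine mul_lt_mul_of_pos_left (strictAntiOn_fluxProfile ha ?_ ?_ (hscale hxy)) hc
    exacts [(one_le_div hρ).2 (le_of_lt hx), (one_le_div hρ).2 (le_of_lt hy)]
end

section
/- The maximum flux is Q(ρ_cr) = v_max · ρ_cr · e^{−1/a}, i.e., for all ρ > 0, ρ·V(ρ) ≤ v_max · ρ_cr · exp(−1/a), with equality iff ρ = ρ_cr. -/
/-!
Writing `x = ρ / ρ_cr`, the flux is `v_max * ρ_cr * x * exp (-(x ^ a) / a)`, so everything reduces to
`log x - x ^ a / a ≤ -1 / a`. That is `log t ≤ t - 1` at `t = x ^ a`, divided by `a`, and it is strict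
unless `x ^ a = 1`, i.e. `x = 1`.
-/

open Real

lemma mul_exp_neg_rpow_lt {x a : ℝ} (hx : 0 < x) (ha : 0 < a) (hx1 : x ≠ 1) :
    x * exp (-(1 / a) * x ^ a) < exp (-1 / a) := by
  have hxa : x ^ a ≠ 1 := by
    rwa [← one_rpow a, Ne, rpow_left_inj hx.le zero_le_one ha.ne']
  have hlog : a * log x < x ^ a - 1 := by
    simpa only [log_rpow hx] using log_lt_sub_one_of_pos (rpow_pos_of_pos hx a) hxa
  have hexponent : log x + -(1 / a) * x ^ a < -1 / a := by
    have hdiff : log x + -(1 / a) * x ^ a - -1 / a = (a * log x - (x ^ a - 1)) / a := by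
      field_simp
      ring
    linarith [div_neg_of_neg_of_pos (sub_neg.mpr hlog) ha]
  calc x * exp (-(1 / a) * x ^ a) = exp (log x + -(1 / a) * x ^ a) := by rw [exp_add, exp_log hx]
    _ < exp (-1 / a) := exp_lt_exp.mpr hexponent

lemma mul_exp_neg_rpow_le {x a : ℝ} (hx : 0 < x) (ha : 0 < a) :
    x * exp (-(1 / a) * x ^ a) ≤ exp (-1 / a) := by
  rcases eq_or_ne x 1 with rfl | hx1
  · simp [neg_div]
  · exact (mul_exp_neg_rpow_lt hx ha hx1).le

lemma mul_exp_neg_rpow_eq_iff {x a : ℝ} (hx : 0 < x) (ha : 0 < a) :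
    x * exp (-(1 / a) * x ^ a) = exp (-1 / a) ↔ x = 1 := by
  refine ⟨fun h => ?_, fun h => ?_⟩
  · by_contra hx1
    exact (mul_exp_neg_rpow_lt hx ha hx1).ne h
  · subst h
    simp [neg_div]

theorem flux_max
    (v_max ρ_cr a : ℝ) (hv : 0 < v_max) (hρ : 0 < ρ_cr) (ha : 0 < a) :
    ∀ ρ : ℝ, 0 < ρ →
      ρ * (v_max * Real.exp (-(1/a) * (ρ/ρ_cr) ^ a))
          ≤ v_max * ρ_cr * Real.exp (-1/a) ∧
      (ρ * (v_max * Real.exp (-(1/a) * (ρ/ρ_cr) ^ a))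
          = v_max * ρ_cr * Real.exp (-1/a) ↔ ρ = ρ_cr) := by
  intro ρ hρ0
  have hx : 0 < ρ / ρ_cr := div_pos hρ0 hρ
  have hc : 0 < v_max * ρ_cr := mul_pos hv hρ
  have hflux : ρ * (v_max * exp (-(1 / a) * (ρ / ρ_cr) ^ a))
      = v_max * ρ_cr * (ρ / ρ_cr * exp (-(1 / a) * (ρ / ρ_cr) ^ a)) := by
    field_simp
  rw [hflux, mul_right_inj' hc.ne', mul_exp_neg_rpow_eq_iff hx ha, div_eq_one_iff_eq hρ.ne']
  exact ⟨mul_le_mul_of_nonneg_left (mul_exp_neg_rpow_le hx ha) hc.le, Iff.rfl⟩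
end
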